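/- Let n ≥ 1, let X be a random variable with the binomial distribution Bin(n−1, 1/2), and define δ_X = 0 if X is even and δ_X = 1 if X is odd. Then the random variable X + δ_X has the distribution of a Binomial(n,1/2) random variable conditioned to be even; that is, P[X + δ_X = k] = C(n,k)/2^{n−1} for every even k ∈ {0,1,…,n}, and P[X + δ_X = k] = 0 for odd k. -/
import Mathlib


open MeasureTheory

/-- Let `n ≥ 1` and let `X` be a random variable with the binomial distribution
`Bin(n-1, 1/2)`, i.e. `P[X = k] = (n-1).choose k / 2 ^ (n-1)` for every `k`.
Define `δ_X = 0` if `X` is even and `δ_X = 1` if `X` is odd.  Then `X + δ_X` has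
the distribution of a `Binomial(n, 1/2)` random variable conditioned to be even:
`P[X + δ_X = k] = n.choose k / 2 ^ (n-1)` for even `k` and `0` for odd `k`. -/
theorem binomial_plus_parity_dist {Ω : Type*} [MeasurableSpace Ω] (μ : Measure Ω)
    [IsProbabilityMeasure μ] (n : ℕ) (hn : 1 ≤ n) (X : Ω → ℕ) (hX : Measurable X)
    (hdist : ∀ k : ℕ, μ {ω | X ω = k} = ((n - 1).choose k : ENNReal) / 2 ^ (n - 1)) :
    ∀ k : ℕ,
      μ {ω | X ω + (if Even (X ω) then 0 else 1) = k} =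
        if Even k then ((n.choose k : ENNReal) / 2 ^ (n - 1)) else 0 := by
  intro k
  by_cases hk : Even k
  · rw [if_pos hk]
    rcases Nat.eq_zero_or_eq_succ_pred k with hk0 | hksucc
    · subst hk0
      have hset : {ω | X ω + (if Even (X ω) then 0 else 1) = 0} = {ω | X ω = 0} := by
        ext ω
        simp only [Set.mem_setOf_eq]
        constructor
        · intro h
          omega
        · intro h
          simp [h]
      rw [hset, hdist 0]
      simp
    · set j := k - 1 with hj
      have hkj : k = j + 1 := hksucc
      have hjodd : ¬ Even j := by
        rw [hkj] at hk; rcases Nat.even_or_odd j with h | h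
        · exact absurd hk (by simp [Nat.even_add_one, h])
        · simpa using h
      have hset : {ω | X ω + (if Even (X ω) then 0 else 1) = k} =
          {ω | X ω = k} ∪ {ω | X ω = j} := by
        ext ω
        simp only [Set.mem_setOf_eq, Set.mem_union]
        by_cases he : Even (X ω)
        · rw [if_pos he]
          constructor
          · intro h; left; omega
          · rintro (h | h)
            · omega
            · exact absurd (h ▸ he) hjodd
        · rw [if_neg he]
          constructor
          · intro h; right; omega
          · rintro (h | h)
            · exact absurd (h ▸ hk) (h ▸ he)
            · omega
      have hdisj : Disjoint {ω | X ω = k} {ω | X ω = j} := by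
        rw [Set.disjoint_left]
        intro ω h1 h2
        simp only [Set.mem_setOf_eq] at h1 h2
        omega
      rw [hset, measure_union hdisj (hX (measurableSet_singleton j)), hdist k, hdist j]
      rw [ENNReal.div_add_div_same]
      congr 1
      rw [← Nat.cast_add]
      congr 1
      obtain ⟨m, rfl⟩ : ∃ m, n = m + 1 := ⟨n - 1, (Nat.succ_pred_eq_of_pos hn).symm⟩
      simp only [Nat.add_sub_cancel]
      rw [hkj, Nat.choose_succ_succ']
      omega
  · rw [if_neg hk]
    have hset : {ω | X ω + (if Even (X ω) then 0 else 1) = k} = ∅ := by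
      ext ω
      simp only [Set.mem_setOf_eq, Set.mem_empty_iff_false, iff_false]
      intro h
      by_cases he : Even (X ω)
      · rw [if_pos he] at h; exact hk (by rw [← h]; simpa using he)
      · rw [if_neg he] at h
        rcases Nat.not_even_iff_odd.mp he with ⟨m, hm⟩
        exact hk ⟨m + 1, by omega⟩
    rw [hset, measure_empty]
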